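/- For invertible matrices A, B ∈ ℝ^{d×d} and any 0 ≤ s < d, the singular value function is submultiplicative: φ^s(AB) ≤ φ^s(A) φ^s(B). -/

import Mathlib

/-!
Write `P_k(M) = α₁(M)⋯α_k(M)`. Its square is the largest eigenvalue of the `k`-th compound matrix
`C_k(MᴴM)`: the compound of a spectral decomposition `MᴴM = Q Λ Qᴴ` is again one, with
eigenvalues the `k`-fold products of eigenvalues of `MᴴM`. Since `C_k` is multiplicative,
`C_k((AB)ᴴ(AB)) = C_k(B)ᴴ C_k(AᴴA) C_k(B)`, and the Rayleigh quotient bound gives Horn's inequality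
`P_k(AB) ≤ P_k(A) P_k(B)`. Finally `φ^s = P_l^(1-t) P_(l+1)^t` with `l = ⌊s⌋`, `t = s - l`,
so the claim follows from Horn's inequality for `k = l` and `k = l + 1`.
-/

open Matrix Finset

/-- Singular values of `A` in decreasing order: square roots of the eigenvalues of `AᵀA`. -/
noncomputable def singVals {d : ℕ} (A : Matrix (Fin d) (Fin d) ℝ) : Fin d → ℝ :=
  fun j => Real.sqrt ((Matrix.isHermitian_conjTranspose_mul_self A).eigenvalues
    (Tuple.sort (Matrix.isHermitian_conjTranspose_mul_self A).eigenvalues j.rev))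

/-- The singular value function `φ^s(A) = α₁(A)⋯α_l(A)·α_{l+1}(A)^{s-l}`, `l = ⌊s⌋`. -/
noncomputable def svf {d : ℕ} (s : ℝ) (A : Matrix (Fin d) (Fin d) ℝ) : ℝ :=
  if h : ⌊s⌋₊ < d then
    (∏ j : Fin d, if (j : ℕ) < ⌊s⌋₊ then singVals A j else 1) *
      singVals A ⟨⌊s⌋₊, h⟩ ^ (s - (⌊s⌋₊ : ℝ))
  else 0

theorem Fin.prod_ite_val_lt_succ {α : Type*} [CommMonoid α] {d k : ℕ} (hk : k < d)
    (f : Fin d → α) :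
    ∏ j : Fin d, (if (j : ℕ) < k + 1 then f j else 1) =
      f ⟨k, hk⟩ * ∏ j : Fin d, if (j : ℕ) < k then f j else 1 := by
  have split (j : Fin d) : (if (j : ℕ) < k + 1 then f j else 1) =
      (if j = ⟨k, hk⟩ then f j else 1) * (if (j : ℕ) < k then f j else 1) := by
    rcases lt_trichotomy (j : ℕ) k with h | h | h
    · simp [h, h.le, Fin.ext_iff, h.ne]
    · simp [Fin.ext_iff, h]
    · simp [Fin.ext_iff, h.ne', not_le.mpr h, not_lt.mpr h.le]
  rw [prod_congr rfl fun j _ => split j, prod_mul_distrib, prod_ite_eq' univ]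
  simp

theorem Fin.prod_le_prod_ite_val_lt_card {R : Type*} [CommSemiring R] [PartialOrder R]
    [IsOrderedRing R] {d : ℕ} {g : Fin d → R} (h0 : ∀ i, 0 ≤ g i) (hg : Antitone g)
    (s : Finset (Fin d)) : ∏ i ∈ s, g i ≤ ∏ j : Fin d, if (j : ℕ) < #s then g j else 1 := by
  induction s using Finset.induction_on_max with
  | empty => simp
  | insert a s has ih =>
    have ha : a ∉ s := fun h => lt_irrefl a (has a h)
    have hcard : #s ≤ a := by
      simpa using card_le_card (fun x hx => Finset.mem_Iio.mpr (has x hx) : s ⊆ Iio a)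
    rw [prod_insert ha, card_insert_of_notMem ha, Fin.prod_ite_val_lt_succ (hcard.trans_lt a.isLt)]
    exact mul_le_mul (hg (Fin.le_def.mpr hcard)) ih (prod_nonneg fun i _ => h0 i) (h0 _)

namespace Matrix

section Compound

variable {R ι : Type*} [CommRing R] [Fintype ι] [LinearOrder ι]

/-- Defined through `⋀^k`, so that multiplicativity (the Cauchy–Binet formula) is functoriality. -/
noncomputable def compound (k : ℕ) (M : Matrix ι ι R) :
    Matrix (Set.powersetCard ι k) (Set.powersetCard ι k) R :=
  LinearMap.toMatrix ((Pi.basisFun R ι).exteriorPower k) ((Pi.basisFun R ι).exteriorPower k)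
    (exteriorPower.map k (Matrix.toLin' M))

variable (k : ℕ)

open Set.powersetCard in
theorem compound_apply (M : Matrix ι ι R) (s t : Set.powersetCard ι k) :
    compound k M s t = (M.submatrix (ofFinEmbEquiv.symm s) (ofFinEmbEquiv.symm t)).det := by
  rw [compound, LinearMap.toMatrix_apply, exteriorPower.basis_repr_apply, exteriorPower.basis_apply,
    exteriorPower.ιMulti_family, exteriorPower.map_apply_ιMulti,
    exteriorPower.ιMultiDual_apply_ιMulti, ← det_transpose]
  congr 1
  ext i j
  simp

theorem compound_mul (M N : Matrix ι ι R) : compound k (M * N) = compound k M * compound k N := by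
  rw [compound, toLin'_mul, exteriorPower.map_comp,
    LinearMap.toMatrix_comp _ ((Pi.basisFun R ι).exteriorPower k)]
  rfl

theorem compound_one : compound k (1 : Matrix ι ι R) = 1 := by
  rw [compound, toLin'_one, exteriorPower.map_id, LinearMap.toMatrix_id]

theorem compound_conjTranspose [StarRing R] (M : Matrix ι ι R) :
    compound k Mᴴ = (compound k M)ᴴ := by
  ext s t
  rw [conjTranspose_apply, compound_apply, compound_apply, ← det_conjTranspose,
    conjTranspose_submatrix]

open Set.powersetCard in
theorem compound_diagonal (v : ι → R) :
    compound k (diagonal v) = diagonal fun s : Set.powersetCard ι k => ∏ i ∈ s.val, v i := by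
  ext s t
  rw [compound_apply]
  by_cases hst : s = t
  · subst hst
    rw [submatrix_diagonal _ _ (ofFinEmbEquiv.symm s).injective, det_diagonal,
      diagonal_apply_eq, ← image_orderEmbOfFin_univ s.val (card_eq s),
      prod_image fun _ _ _ _ h => (s.val.orderEmbOfFin (card_eq s)).injective h]
    rfl
  · rw [diagonal_apply_ne _ hst]
    obtain ⟨a, has, hat⟩ := (exists_mem_notMem_iff_ne s t).mp hst
    obtain ⟨i, rfl⟩ := (mem_range_ofFinEmbEquiv_symm_iff_mem s a).mpr has
    refine det_eq_zero_of_row_eq_zero i fun j => diagonal_apply_ne _ fun h => hat ?_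
    rw [h]
    exact (mem_range_ofFinEmbEquiv_symm_iff_mem t _).mp ⟨j, rfl⟩

theorem compound_mem_unitaryGroup [StarRing R] {U : Matrix ι ι R} (hU : U ∈ unitaryGroup ι R) :
    compound k U ∈ unitaryGroup (Set.powersetCard ι k) R := by
  rw [mem_unitaryGroup_iff, star_eq_conjTranspose, ← compound_conjTranspose, ← compound_mul,
    ← star_eq_conjTranspose, mem_unitaryGroup_iff.mp hU, compound_one]

theorem IsHermitian.exists_compound_eq_conj_diagonal {H : Matrix ι ι ℝ} (hH : H.IsHermitian) :
    ∃ U ∈ unitaryGroup (Set.powersetCard ι k) ℝ,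
      compound k H = U * diagonal (fun s => ∏ i ∈ s.val, hH.eigenvalues i) * star U := by
  refine ⟨compound k hH.eigenvectorUnitary, compound_mem_unitaryGroup k hH.eigenvectorUnitary.2, ?_⟩
  conv_lhs => rw [hH.spectral_theorem, Unitary.conjStarAlgAut_apply]
  rw [compound_mul, compound_mul, compound_diagonal, star_eq_conjTranspose,
    star_eq_conjTranspose, compound_conjTranspose]
  simp [RCLike.ofReal_real_eq_id]

end Compound

section QuadraticForm

variable {ι κ : Type*} [Fintype ι] [Fintype κ]

theorem dotProduct_conjTranspose_mul_mulVec (X Z : Matrix κ ι ℝ) (y : ι → ℝ) :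
    y ⬝ᵥ (Xᴴ * Z) *ᵥ y = (X *ᵥ y) ⬝ᵥ Z *ᵥ y := by
  rw [← mulVec_mulVec, conjTranspose_eq_transpose_of_trivial, dotProduct_transpose_mulVec,
    dotProduct_comm]

theorem dotProduct_conj_mulVec (U D : Matrix ι ι ℝ) (y : ι → ℝ) :
    y ⬝ᵥ (U * D * star U) *ᵥ y = (star U *ᵥ y) ⬝ᵥ D *ᵥ (star U *ᵥ y) := by
  have h : U * D * star U = (star U)ᴴ * (D * star U) := by
    rw [star_eq_conjTranspose, conjTranspose_conjTranspose, Matrix.mul_assoc]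
  rw [h, dotProduct_conjTranspose_mul_mulVec, ← mulVec_mulVec]

variable [DecidableEq ι] {U : Matrix ι ι ℝ}

theorem dotProduct_star_mulVec_self (hU : U ∈ unitaryGroup ι ℝ) (y : ι → ℝ) :
    (star U *ᵥ y) ⬝ᵥ (star U *ᵥ y) = y ⬝ᵥ y := by
  have := dotProduct_conj_mulVec U 1 y
  rwa [Matrix.mul_one, mem_unitaryGroup_iff.mp hU, one_mulVec, one_mulVec, eq_comm] at this

theorem dotProduct_diagonal_mulVec_le {μ : ι → ℝ} {c : ℝ} (hμ : ∀ s, μ s ≤ c) (z : ι → ℝ) :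
    z ⬝ᵥ diagonal μ *ᵥ z ≤ c * (z ⬝ᵥ z) := by
  simp only [dotProduct, mulVec_diagonal, mul_sum]
  exact sum_le_sum fun s _ => by nlinarith [hμ s, mul_self_nonneg (z s)]

theorem dotProduct_conj_diagonal_mulVec_le (hU : U ∈ unitaryGroup ι ℝ) {μ : ι → ℝ} {c : ℝ}
    (hμ : ∀ s, μ s ≤ c) (y : ι → ℝ) :
    y ⬝ᵥ (U * diagonal μ * star U) *ᵥ y ≤ c * (y ⬝ᵥ y) := by
  rw [dotProduct_conj_mulVec, ← dotProduct_star_mulVec_self hU y]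
  exact dotProduct_diagonal_mulVec_le hμ _

theorem exists_dotProduct_conj_diagonal_mulVec_eq (hU : U ∈ unitaryGroup ι ℝ) (μ : ι → ℝ)
    (s₀ : ι) : ∃ y : ι → ℝ, y ⬝ᵥ y = 1 ∧ y ⬝ᵥ (U * diagonal μ * star U) *ᵥ y = μ s₀ := by
  have hy : star U *ᵥ (U *ᵥ Pi.single s₀ 1) = Pi.single s₀ 1 := by
    rw [mulVec_mulVec, mem_unitaryGroup_iff'.mp hU, one_mulVec]
  refine ⟨U *ᵥ Pi.single s₀ 1, ?_, ?_⟩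
  · rw [← dotProduct_star_mulVec_self hU, hy]
    simp
  · rw [dotProduct_conj_mulVec, hy]
    simp

end QuadraticForm

end Matrix

variable {d k : ℕ}

noncomputable abbrev gramEigenvalues (M : Matrix (Fin d) (Fin d) ℝ) : Fin d → ℝ :=
  (isHermitian_conjTranspose_mul_self M).eigenvalues

noncomputable def singValsPerm (M : Matrix (Fin d) (Fin d) ℝ) : Equiv.Perm (Fin d) :=
  Fin.revPerm.trans (Tuple.sort (gramEigenvalues M))

theorem singVals_sq (M : Matrix (Fin d) (Fin d) ℝ) (j : Fin d) :
    singVals M j ^ 2 = gramEigenvalues M (singValsPerm M j) :=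
  Real.sq_sqrt (eigenvalues_conjTranspose_mul_self_nonneg M _)

theorem antitone_singVals (M : Matrix (Fin d) (Fin d) ℝ) : Antitone (singVals M) :=
  fun _ _ hij =>
    Real.sqrt_le_sqrt (Tuple.monotone_sort (gramEigenvalues M) (Fin.rev_le_rev.mpr hij) :)

theorem singVals_nonneg (M : Matrix (Fin d) (Fin d) ℝ) (j : Fin d) : 0 ≤ singVals M j :=
  Real.sqrt_nonneg _

noncomputable def topSingValsProd (k : ℕ) (M : Matrix (Fin d) (Fin d) ℝ) : ℝ :=
  ∏ j : Fin d, if (j : ℕ) < k then singVals M j else 1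

theorem topSingValsProd_nonneg (k : ℕ) (M : Matrix (Fin d) (Fin d) ℝ) : 0 ≤ topSingValsProd k M :=
  prod_nonneg fun j _ => by split_ifs; exacts [singVals_nonneg M j, zero_le_one]

theorem topSingValsProd_sq (k : ℕ) (M : Matrix (Fin d) (Fin d) ℝ) :
    topSingValsProd k M ^ 2 = ∏ j : Fin d, if (j : ℕ) < k then singVals M j ^ 2 else 1 := by
  rw [topSingValsProd, ← prod_pow]
  exact prod_congr rfl fun _ _ => by split_ifs <;> simp

theorem prod_gramEigenvalues_le (M : Matrix (Fin d) (Fin d) ℝ) (s : Set.powersetCard (Fin d) k) :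
    ∏ i ∈ s.val, gramEigenvalues M i ≤ topSingValsProd k M ^ 2 := by
  have hs : ∏ i ∈ s.val, gramEigenvalues M i =
      ∏ j ∈ s.val.map (singValsPerm M).symm.toEmbedding, singVals M j ^ 2 := by
    simp [singVals_sq]
  have hcard : #(s.val.map (singValsPerm M).symm.toEmbedding) = k := by
    rw [card_map, Set.powersetCard.card_eq]
  have := Fin.prod_le_prod_ite_val_lt_card (g := fun j => singVals M j ^ 2) (fun _ => sq_nonneg _)
    (fun _ _ hij => pow_le_pow_left₀ (singVals_nonneg M _) (antitone_singVals M hij) 2)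
    (s.val.map (singValsPerm M).symm.toEmbedding)
  rw [hcard] at this
  rwa [hs, topSingValsProd_sq]

theorem exists_prod_gramEigenvalues_eq (hk : k ≤ d) (M : Matrix (Fin d) (Fin d) ℝ) :
    ∃ s : Set.powersetCard (Fin d) k,
      ∏ i ∈ s.val, gramEigenvalues M i = topSingValsProd k M ^ 2 := by
  refine ⟨⟨(univ.filter fun j : Fin d => (j : ℕ) < k).map (singValsPerm M).toEmbedding, ?_⟩, ?_⟩
  · rw [Set.powersetCard.mem_iff, card_map, Fin.card_filter_val_lt, min_eq_right hk]
  · rw [topSingValsProd_sq, prod_map, ← prod_filter]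
    simp [singVals_sq]

theorem dotProduct_compound_gram_mulVec_le (M : Matrix (Fin d) (Fin d) ℝ)
    (y : Set.powersetCard (Fin d) k → ℝ) :
    y ⬝ᵥ compound k (Mᴴ * M) *ᵥ y ≤ topSingValsProd k M ^ 2 * (y ⬝ᵥ y) := by
  obtain ⟨U, hU, hMM⟩ := (isHermitian_conjTranspose_mul_self M).exists_compound_eq_conj_diagonal k
  rw [hMM]
  exact dotProduct_conj_diagonal_mulVec_le hU (prod_gramEigenvalues_le M) y

theorem exists_dotProduct_compound_gram_mulVec_eq (hk : k ≤ d) (M : Matrix (Fin d) (Fin d) ℝ) :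
    ∃ y : Set.powersetCard (Fin d) k → ℝ,
      y ⬝ᵥ y = 1 ∧ y ⬝ᵥ compound k (Mᴴ * M) *ᵥ y = topSingValsProd k M ^ 2 := by
  obtain ⟨U, hU, hMM⟩ := (isHermitian_conjTranspose_mul_self M).exists_compound_eq_conj_diagonal k
  obtain ⟨s, hs⟩ := exists_prod_gramEigenvalues_eq hk M
  rw [hMM, ← hs]
  exact exists_dotProduct_conj_diagonal_mulVec_eq hU _ s

theorem topSingValsProd_mul_le (hk : k ≤ d) (A B : Matrix (Fin d) (Fin d) ℝ) :
    topSingValsProd k (A * B) ≤ topSingValsProd k A * topSingValsProd k B := by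
  obtain ⟨y, hy1, hy⟩ := exists_dotProduct_compound_gram_mulVec_eq hk (A * B)
  have hgram : compound k ((A * B)ᴴ * (A * B)) =
      (compound k B)ᴴ * (compound k (Aᴴ * A) * compound k B) := by
    rw [← compound_conjTranspose, ← compound_mul, ← compound_mul, conjTranspose_mul]
    simp only [Matrix.mul_assoc]
  have hsq : topSingValsProd k (A * B) ^ 2 ≤ (topSingValsProd k A * topSingValsProd k B) ^ 2 :=
    calc topSingValsProd k (A * B) ^ 2
        = (compound k B *ᵥ y) ⬝ᵥ compound k (Aᴴ * A) *ᵥ (compound k B *ᵥ y) := by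
          rw [← hy, hgram, dotProduct_conjTranspose_mul_mulVec, mulVec_mulVec]
      _ ≤ topSingValsProd k A ^ 2 * ((compound k B *ᵥ y) ⬝ᵥ (compound k B *ᵥ y)) :=
          dotProduct_compound_gram_mulVec_le A _
      _ = topSingValsProd k A ^ 2 * (y ⬝ᵥ compound k (Bᴴ * B) *ᵥ y) := by
          rw [compound_mul, compound_conjTranspose, dotProduct_conjTranspose_mul_mulVec]
      _ ≤ topSingValsProd k A ^ 2 * (topSingValsProd k B ^ 2 * (y ⬝ᵥ y)) := by
          gcongr
          exact dotProduct_compound_gram_mulVec_le B y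
      _ = (topSingValsProd k A * topSingValsProd k B) ^ 2 := by
          rw [hy1]
          ring
  exact (pow_le_pow_iff_left₀ (topSingValsProd_nonneg _ _)
    (mul_nonneg (topSingValsProd_nonneg _ _) (topSingValsProd_nonneg _ _)) two_ne_zero).mp hsq

theorem topSingValsProd_succ (hk : k < d) (M : Matrix (Fin d) (Fin d) ℝ) :
    topSingValsProd (k + 1) M = singVals M ⟨k, hk⟩ * topSingValsProd k M :=
  Fin.prod_ite_val_lt_succ hk _

theorem svf_eq_rpow_mul_rpow {s : ℝ} (hl : ⌊s⌋₊ < d) (M : Matrix (Fin d) (Fin d) ℝ) :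
    svf s M = topSingValsProd ⌊s⌋₊ M ^ (1 - (s - ⌊s⌋₊)) *
      topSingValsProd (⌊s⌋₊ + 1) M ^ (s - ⌊s⌋₊) := by
  have hP := topSingValsProd_nonneg ⌊s⌋₊ M
  rw [svf, dif_pos hl, topSingValsProd_succ hl, Real.mul_rpow (singVals_nonneg _ _) hP,
    mul_comm (singVals M _ ^ _), ← mul_assoc, ← Real.rpow_add' hP (by norm_num), sub_add_cancel,
    Real.rpow_one]
  rfl

theorem stmt12_general {d : ℕ} (A B : Matrix (Fin d) (Fin d) ℝ)
    (s : ℝ) (hs : 0 ≤ s) :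
    svf s (A * B) ≤ svf s A * svf s B := by
  by_cases hl : ⌊s⌋₊ < d
  swap
  · simp [svf, hl]
  have ht0 : 0 ≤ s - ⌊s⌋₊ := sub_nonneg.mpr (Nat.floor_le hs)
  have ht1 : 0 ≤ 1 - (s - ⌊s⌋₊) := by linarith [Nat.lt_floor_add_one s]
  have hP (k : ℕ) (M : Matrix (Fin d) (Fin d) ℝ) := topSingValsProd_nonneg k M
  simp only [svf_eq_rpow_mul_rpow hl]
  calc _ ≤ (topSingValsProd ⌊s⌋₊ A * topSingValsProd ⌊s⌋₊ B) ^ (1 - (s - ⌊s⌋₊)) *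
        (topSingValsProd (⌊s⌋₊ + 1) A * topSingValsProd (⌊s⌋₊ + 1) B) ^ (s - ⌊s⌋₊) := by
        refine mul_le_mul ?_ ?_ (Real.rpow_nonneg (hP _ _) _)
          (Real.rpow_nonneg (mul_nonneg (hP _ _) (hP _ _)) _)
        · exact Real.rpow_le_rpow (hP _ _) (topSingValsProd_mul_le hl.le A B) ht1
        · exact Real.rpow_le_rpow (hP _ _) (topSingValsProd_mul_le hl A B) ht0
    _ = _ := by
        rw [Real.mul_rpow (hP _ _) (hP _ _), Real.mul_rpow (hP _ _) (hP _ _)]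
        ring

/-- Submultiplicativity of the singular value function. -/
theorem stmt12 {d : ℕ} (A B : Matrix (Fin d) (Fin d) ℝ)
    (hA : IsUnit A) (hB : IsUnit B) (s : ℝ) (hs : 0 ≤ s) (hsd : s < d) :
    svf s (A * B) ≤ svf s A * svf s B :=
  stmt12_general A B s hs
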